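/- arXiv:2309.06929 — 7 statements merged into one kernel-verified Lean document; each statement's English description precedes it below -/
import Mathlib

section
/- Let g_1,…,g_m ∈ ℝ^n. Define φ(d) = max_{i∈{1,…,m}} ⟨g_i, d⟩ + (1/2)‖d‖² for d ∈ ℝ^n and ψ(λ) = (1/2)‖Σ_{i=1}^m λ_i g_i‖² for λ ∈ Δ_m. Then min_{d∈ℝ^n} φ(d) = − min_{λ∈Δ_m} ψ(λ), and for any λ* minimizing ψ over Δ_m, the vector d* = −Σ_{i=1}^m λ*_i g_i is the unique minimizer of φ over ℝ^n. -/
/-!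
If `λ*` minimizes `‖∑ λᵢ gᵢ‖` over the simplex, then `G = ∑ λ*ᵢ gᵢ` is the minimum-norm point of the
convex hull of the `gᵢ`, so the projection inequality gives `‖G‖² ≤ ⟪G, gᵢ⟫` for every `i`. Hence
`max_i ⟪gᵢ, -G⟫ = -‖G‖²` and `φ(-G) = -‖G‖²/2 = -ψ(λ*)`. For any `d`, averaging with the weights `λ*`
gives `max_i ⟪gᵢ, d⟫ ≥ ⟪G, d⟫`, so `φ d ≥ -‖G‖²/2 + ‖d + G‖²/2 = φ(-G) + ‖d - (-G)‖²/2`: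
`φ` grows quadratically away from `-G`, which is therefore its unique minimizer.
-/

open scoped RealInnerProductSpace

open Finset

noncomputable def fmax {m : ℕ} [NeZero m] (f : Fin m → ℝ) : ℝ :=
  Finset.univ.sup' Finset.univ_nonempty f

variable {E : Type*} [NormedAddCommGroup E] [InnerProductSpace ℝ E]

theorem Convex.norm_sq_le_inner_of_isMinOn {K : Set E} (hK : Convex ℝ K) {v : E} (hv : v ∈ K)
    (hmin : IsMinOn (‖·‖) K v) {w : E} (hw : w ∈ K) : ‖v‖ ^ 2 ≤ ⟪v, w⟫ := by
  have : Nonempty K := ⟨⟨v, hv⟩⟩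
  have hinf : ‖0 - v‖ = ⨅ x : K, ‖0 - (x : E)‖ := by
    simp only [zero_sub, norm_neg]
    exact le_antisymm (le_ciInf fun x => isMinOn_iff.1 hmin x x.2)
      (ciInf_le (f := fun x : K => ‖(x : E)‖) ⟨0, by rintro _ ⟨x, rfl⟩; positivity⟩ ⟨v, hv⟩)
  have := (norm_eq_iInf_iff_real_inner_le_zero hK hv).1 hinf w hw
  rw [zero_sub, inner_neg_left, inner_sub_right, real_inner_self_eq_norm_sq] at this
  linarith

section Simplex

variable {ι : Type*} [Fintype ι] (g : ι → E)

theorem norm_sq_le_inner_of_isMinOn_stdSimplex {c : ι → ℝ} (hc : c ∈ stdSimplex ℝ ι)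
    (hmin : IsMinOn (fun c : ι → ℝ => ‖∑ i, c i • g i‖) (stdSimplex ℝ ι) c) (i : ι) :
    ‖∑ j, c j • g j‖ ^ 2 ≤ ⟪∑ j, c j • g j, g i⟫ := by
  classical
  have hK := (convex_stdSimplex ℝ ι).linear_image (Fintype.linearCombination ℝ g)
  refine hK.norm_sq_le_inner_of_isMinOn ⟨c, hc, rfl⟩ ?_
    ⟨Pi.single i 1, single_mem_stdSimplex ℝ i, by simp [Fintype.linearCombination_apply]⟩
  rw [isMinOn_iff]
  rintro _ ⟨c', hc', rfl⟩
  exact isMinOn_iff.1 hmin c' hc'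

variable [Nonempty ι]

theorem inner_sum_smul_le_sup' {c : ι → ℝ} (hc : c ∈ stdSimplex ℝ ι) (d : E) :
    ⟪∑ i, c i • g i, d⟫ ≤ univ.sup' univ_nonempty fun i => ⟪g i, d⟫ := by
  simp only [sum_inner, real_inner_smul_left]
  calc ∑ i, c i * ⟪g i, d⟫
      ≤ ∑ i, c i * univ.sup' univ_nonempty (fun i => ⟪g i, d⟫) :=
        sum_le_sum fun i _ => mul_le_mul_of_nonneg_left (le_sup' (fun i => ⟪g i, d⟫) (mem_univ i)) (hc.1 i)
    _ = univ.sup' univ_nonempty fun i => ⟪g i, d⟫ := by rw [← sum_mul, hc.2, one_mul]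

theorem sup'_inner_neg_eq {c : ι → ℝ} (hc : c ∈ stdSimplex ℝ ι)
    (hopt : ∀ i, ‖∑ j, c j • g j‖ ^ 2 ≤ ⟪∑ j, c j • g j, g i⟫) :
    (univ.sup' univ_nonempty fun i => ⟪g i, -∑ j, c j • g j⟫) = -‖∑ j, c j • g j‖ ^ 2 := by
  refine le_antisymm (sup'_le _ _ fun i _ => ?_) ?_
  · rw [inner_neg_right, real_inner_comm]
    linarith [hopt i]
  · have := inner_sum_smul_le_sup' g hc (-∑ j, c j • g j)
    rwa [inner_neg_right, real_inner_self_eq_norm_sq] at this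

theorem neg_norm_sq_div_two_add_le_sup'_inner_add {c : ι → ℝ} (hc : c ∈ stdSimplex ℝ ι) (d : E) :
    -‖∑ j, c j • g j‖ ^ 2 / 2 + ‖d + ∑ j, c j • g j‖ ^ 2 / 2 ≤
      (univ.sup' univ_nonempty fun i => ⟪g i, d⟫) + ‖d‖ ^ 2 / 2 := by
  have := inner_sum_smul_le_sup' g hc d
  rw [norm_add_sq_real, real_inner_comm]
  linarith

end Simplex

/-- Duality for the steepest-descent subproblem: with
`φ d = max_i ⟨g i, d⟩ + ‖d‖²/2` and `ψ λ = ‖∑ λ_i g_i‖²/2`, for any minimizer `λ*` of `ψ`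
over the unit simplex, the vector `d* = −∑ λ*_i g_i` is the unique minimizer of `φ` over
`ℝ^n`, and `min φ = − min ψ` (i.e. `φ d* = −ψ λ*`). -/
theorem stmt0 {n m : ℕ} [NeZero m] (g : Fin m → EuclideanSpace ℝ (Fin n))
    (φ : EuclideanSpace ℝ (Fin n) → ℝ)
    (hφ : ∀ d, φ d = (fmax fun i => ⟪g i, d⟫) + ‖d‖ ^ 2 / 2)
    (ψ : (Fin m → ℝ) → ℝ)
    (hψ : ∀ lam, ψ lam = ‖∑ i, lam i • g i‖ ^ 2 / 2)
    (lamStar : Fin m → ℝ) (hpos : ∀ i, 0 ≤ lamStar i) (hsum : ∑ i, lamStar i = 1)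
    (hlamMin : ∀ lam : Fin m → ℝ, (∀ i, 0 ≤ lam i) → ∑ i, lam i = 1 → ψ lamStar ≤ ψ lam)
    (dStar : EuclideanSpace ℝ (Fin n)) (hd : dStar = -∑ i, lamStar i • g i) :
    φ dStar = -ψ lamStar ∧ (∀ d, φ dStar ≤ φ d) ∧
      ∀ d, d ≠ dStar → φ dStar < φ d := by
  have hc : lamStar ∈ stdSimplex ℝ (Fin m) := ⟨hpos, hsum⟩
  have hmin : IsMinOn (fun c : Fin m → ℝ => ‖∑ i, c i • g i‖) (stdSimplex ℝ (Fin m)) lamStar :=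
    isMinOn_iff.2 fun c hc' => by
      have := hlamMin c hc'.1 hc'.2
      rw [hψ, hψ] at this
      exact (pow_le_pow_iff_left₀ (norm_nonneg _) (norm_nonneg _) two_ne_zero).1 (by linarith)
  have hφStar : φ dStar = -‖∑ i, lamStar i • g i‖ ^ 2 / 2 := by
    rw [hφ, hd, norm_neg, fmax,
      sup'_inner_neg_eq g hc (norm_sq_le_inner_of_isMinOn_stdSimplex g hc hmin)]
    ring
  have hgrowth : ∀ d, φ dStar + ‖d - dStar‖ ^ 2 / 2 ≤ φ d := fun d => by
    rw [hφStar, hφ, hd, sub_neg_eq_add]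
    exact neg_norm_sq_div_two_add_le_sup'_inner_add g hc d
  refine ⟨by rw [hφStar, hψ]; ring, fun d => ?_, fun d hne => ?_⟩
  · linarith [hgrowth d, sq_nonneg ‖d - dStar‖]
  · linarith [hgrowth d, pow_pos (norm_sub_pos_iff.mpr hne) 2]
end

section
/- Let g_1,…,g_m ∈ ℝ^n and let d* be a minimizer over ℝ^n of d ↦ max_{i∈{1,…,m}} ⟨g_i, d⟩ + (1/2)‖d‖². Then ⟨g_i, d*⟩ ≤ −‖d*‖² for every i ∈ {1,…,m}. -/
open scoped RealInnerProductSpace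

lemma le_fmax {m : ℕ} [NeZero m] (f : Fin m → ℝ) (i : Fin m) : f i ≤ fmax f :=
  Finset.le_sup' f (Finset.mem_univ i)

lemma fmax_const_mul {m : ℕ} [NeZero m] {t : ℝ} (ht : 0 ≤ t) (f : Fin m → ℝ) :
    fmax (fun i => t * f i) = t * fmax f :=
  (Finset.apply_sup'_eq_sup'_comp _ (t * ·) fun x y => mul_max_of_nonneg x y ht).symm

lemma two_mul_add_eq_zero_of_isMinOn_Ici {a b : ℝ}
    (h : IsMinOn (fun t : ℝ => a * t ^ 2 + b * t) (Set.Ici 0) 1) : 2 * a + b = 0 := by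
  have hderiv : HasDerivAt (fun t : ℝ => a * t ^ 2 + b * t) (2 * a + b) 1 :=
    (((hasDerivAt_pow 2 1).const_mul a).fun_add ((hasDerivAt_id' 1).const_mul b)).congr_deriv
      (by norm_num [mul_comm])
  exact (h.isLocalMin (Ici_mem_nhds zero_lt_one)).hasDerivAt_eq_zero hderiv

/-- If `d*` minimizes `d ↦ max_i ⟨g i, d⟩ + ‖d‖²/2` over `ℝ^n`, then
`⟨g i, d*⟩ ≤ −‖d*‖²` for every `i`. -/
theorem stmt1 {n m : ℕ} [NeZero m] (g : Fin m → EuclideanSpace ℝ (Fin n))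
    (dStar : EuclideanSpace ℝ (Fin n))
    (hmin : ∀ d : EuclideanSpace ℝ (Fin n),
      (fmax fun i => ⟪g i, dStar⟫) + ‖dStar‖ ^ 2 / 2 ≤
        (fmax fun i => ⟪g i, d⟫) + ‖d‖ ^ 2 / 2) :
    ∀ i, ⟪g i, dStar⟫ ≤ -‖dStar‖ ^ 2 := by
  set M : ℝ := fmax fun i => ⟪g i, dStar⟫
  have hray : IsMinOn (fun t : ℝ => ‖dStar‖ ^ 2 / 2 * t ^ 2 + M * t) (Set.Ici 0) 1 := by
    intro t (ht : 0 ≤ t)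
    have h := hmin (t • dStar)
    simp only [real_inner_smul_right, fmax_const_mul ht, norm_smul, Real.norm_of_nonneg ht] at h
    simp only [Set.mem_ofPred_eq]
    linarith
  have hM : M = -‖dStar‖ ^ 2 := by linarith [two_mul_add_eq_zero_of_isMinOn_Ici hray]
  exact fun i => hM ▸ le_fmax (fun j => ⟪g j, dStar⟫) i
end

section
/- Let g_1,…,g_m ∈ ℝ^n, let λ* ∈ Δ_m be a minimizer over Δ_m of λ ↦ (1/2)‖Σ_{i=1}^m λ_i g_i‖², and set d* = −Σ_{i=1}^m λ*_i g_i. Then for every index i with λ*_i > 0 one has ⟨g_i, d*⟩ = −‖d*‖². -/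
/-!
The minimum-norm point `G = ∑ λ*_i g_i` of the convex set `{∑ λ_i g_i : λ ∈ Δ_m}` satisfies the
variational inequality `⟪G, y - G⟫ ≥ 0` for every `y` in the set; at the vertices `y = g_j` this reads
`⟪G, g_j⟫ ≥ ‖G‖²`. The `λ*`-weighted average of the `⟪G, g_j⟫` is `⟪G, G⟫ = ‖G‖²`, so each of these
inequalities with positive weight is an equality, and `d* = -G`.
-/

open scoped RealInnerProductSpace

section MinimalNorm

variable {E : Type*} [NormedAddCommGroup E] [InnerProductSpace ℝ E]

theorem Convex.inner_sub_nonneg_of_forall_norm_le {K : Set E} (hK : Convex ℝ K) {x : E}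
    (hx : x ∈ K) (hmin : ∀ y ∈ K, ‖x‖ ≤ ‖y‖) {y : E} (hy : y ∈ K) : 0 ≤ ⟪x, y - x⟫ := by
  have : Nonempty K := ⟨⟨x, hx⟩⟩
  have hinf : ‖0 - x‖ = ⨅ w : K, ‖0 - (w : E)‖ := by
    simp only [zero_sub, norm_neg]
    exact le_antisymm (le_ciInf fun w => hmin w w.2)
      (ciInf_le (f := fun w : K => ‖(w : E)‖)
        ⟨0, by rintro _ ⟨w, rfl⟩; exact norm_nonneg _⟩ ⟨x, hx⟩)
  have hobtuse := (norm_eq_iInf_iff_real_inner_le_zero hK hx).1 hinf y hy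
  rw [zero_sub, inner_neg_left] at hobtuse
  linarith

theorem norm_sq_le_inner_of_forall_norm_sum_le {ι : Type*} [Fintype ι] (g : ι → E)
    {lamStar : ι → ℝ} (hlamStar : lamStar ∈ stdSimplex ℝ ι)
    (hmin : ∀ lam ∈ stdSimplex ℝ ι, ‖∑ i, lamStar i • g i‖ ≤ ‖∑ i, lam i • g i‖) (j : ι) :
    ‖∑ i, lamStar i • g i‖ ^ 2 ≤ ⟪∑ i, lamStar i • g i, g j⟫ := by
  classical
  have hK := (convex_stdSimplex ℝ ι).linear_image (Fintype.linearCombination ℝ g)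
  have hvertex : g j ∈ Fintype.linearCombination ℝ g '' stdSimplex ℝ ι :=
    ⟨Pi.single j 1, single_mem_stdSimplex ℝ j, by simp⟩
  have h := hK.inner_sub_nonneg_of_forall_norm_le ⟨lamStar, hlamStar, rfl⟩
    (by rintro _ ⟨lam, hlam, rfl⟩; exact hmin lam hlam) hvertex
  rw [inner_sub_right, real_inner_self_eq_norm_sq, Fintype.linearCombination_apply] at h
  linarith

end MinimalNorm

theorem eq_of_forall_le_of_sum_mul_eq {ι : Type*} [Fintype ι] {w a : ι → ℝ} {c : ℝ}
    (hw : ∀ j, 0 ≤ w j) (hsum : ∑ j, w j = 1) (hle : ∀ j, c ≤ a j)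
    (havg : ∑ j, w j * a j = c) {i : ι} (hi : 0 < w i) : a i = c := by
  have hsums : ∑ j, w j * c = ∑ j, w j * a j := by rw [← Finset.sum_mul, hsum, one_mul, havg]
  have hterm := (Finset.sum_eq_sum_iff_of_le fun j _ =>
    mul_le_mul_of_nonneg_left (hle j) (hw j)).1 hsums i (Finset.mem_univ i)
  exact (mul_left_cancel₀ hi.ne' hterm).symm

/-- If `λ*` minimizes `λ ↦ ‖∑ λ_i g_i‖²/2` over the unit simplex and
`d* = −∑ λ*_i g_i`, then `⟨g i, d*⟩ = −‖d*‖²` for every index `i` with `λ*_i > 0`. -/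
theorem stmt2 {n m : ℕ} (g : Fin m → EuclideanSpace ℝ (Fin n))
    (lamStar : Fin m → ℝ) (hpos : ∀ i, 0 ≤ lamStar i) (hsum : ∑ i, lamStar i = 1)
    (hmin : ∀ lam : Fin m → ℝ, (∀ i, 0 ≤ lam i) → ∑ i, lam i = 1 →
      ‖∑ i, lamStar i • g i‖ ^ 2 / 2 ≤ ‖∑ i, lam i • g i‖ ^ 2 / 2)
    (dStar : EuclideanSpace ℝ (Fin n)) (hd : dStar = -∑ i, lamStar i • g i) :
    ∀ i, 0 < lamStar i → ⟪g i, dStar⟫ = -‖dStar‖ ^ 2 := by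
  intro i hi
  set G := ∑ j, lamStar j • g j
  have hnorm_min : ∀ lam ∈ stdSimplex ℝ (Fin m), ‖G‖ ≤ ‖∑ j, lam j • g j‖ := fun lam hlam =>
    (pow_le_pow_iff_left₀ (norm_nonneg _) (norm_nonneg _) two_ne_zero).1
      (by linarith [hmin lam hlam.1 hlam.2])
  have hle := norm_sq_le_inner_of_forall_norm_sum_le g ⟨hpos, hsum⟩ hnorm_min
  have havg : ∑ j, lamStar j * ⟪G, g j⟫ = ‖G‖ ^ 2 := by
    rw [← real_inner_self_eq_norm_sq, inner_sum]
    simp only [real_inner_smul_right]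
  rw [hd, inner_neg_right, norm_neg, real_inner_comm,
    eq_of_forall_le_of_sum_mul_eq hpos hsum hle havg hi]
end

section
/- Let B be a symmetric positive definite n×n real matrix and g_1,…,g_m ∈ ℝ^n. Then min_{d∈ℝ^n} [ max_{i∈{1,…,m}} ⟨g_i, d⟩ + (1/2)⟨d, B d⟩ ] = − min_{λ∈Δ_m} (1/2)⟨Σ_{i=1}^m λ_i g_i, B^{-1}(Σ_{i=1}^m λ_i g_i)⟩, and for any λ* attaining the right-hand minimum, d* = −B^{-1}(Σ_{i=1}^m λ*_i g_i) is the unique minimizer of the left-hand problem. -/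
/-!
Write `G = ∑ λ*ᵢ gᵢ`, so that `d* = -B⁻¹ G`. Minimality of `λ*` for the quadratic `ψ` along the
segments from `λ*` towards the vertices of the simplex gives the optimality conditions
`⟪G, B⁻¹ G⟫ ≤ ⟪gᵢ, B⁻¹ G⟫`, i.e. `⟪gᵢ, d*⟫ ≤ ⟪G, d*⟫`; hence the maximum in `φ d*` is attained
by the averaged term `⟪G, d*⟫`. For every `d` the maximum dominates the average `⟪G, d⟫`, and
completing the square around `d*` gives
`φ d ≥ ⟪G, d⟫ + ⟪d, B d⟫ / 2 = φ d* + ⟪d - d*, B (d - d*)⟫ / 2`,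
which is minimality and, by positive definiteness, uniqueness.
-/

open scoped RealInnerProductSpace

open Set Filter Topology

lemma nonneg_of_forall_mem_Ioc_nonneg_add_mul {a b : ℝ}
    (h : ∀ t ∈ Ioc (0 : ℝ) 1, 0 ≤ a + t * b) : 0 ≤ a := by
  have hlim : Tendsto (fun t : ℝ => a + t * b) (𝓝[>] 0) (𝓝 a) := by
    have : Continuous fun t : ℝ => a + t * b := by fun_prop
    simpa using (this.tendsto 0).mono_left nhdsWithin_le_nhds
  exact ge_of_tendsto hlim (eventually_of_mem (Ioc_mem_nhdsGT one_pos) h)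

namespace LinearMap.IsSymmetric

variable {E : Type*} [NormedAddCommGroup E] [InnerProductSpace ℝ E] {A : E →ₗ[ℝ] E}

lemma of_rightInverse {A' : E →ₗ[ℝ] E} (hA : A.IsSymmetric) (hinv : ∀ x, A (A' x) = x) :
    A'.IsSymmetric := fun x y => by
  calc ⟪A' x, y⟫ = ⟪A' x, A (A' y)⟫ := by rw [hinv]
    _ = ⟪A (A' x), A' y⟫ := (hA _ _).symm
    _ = ⟪x, A' y⟫ := by rw [hinv]

lemma inner_add_smul_map_add_smul (hA : A.IsSymmetric) (x v : E) (t : ℝ) :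
    ⟪x + t • v, A (x + t • v)⟫ = ⟪x, A x⟫ + 2 * t * ⟪v, A x⟫ + t ^ 2 * ⟪v, A v⟫ := by
  have hcross : ⟪x, A v⟫ = ⟪v, A x⟫ := by rw [← hA, real_inner_comm]
  simp only [map_add, map_smul, inner_add_left, inner_add_right, real_inner_smul_left,
    real_inner_smul_right, hcross]
  ring

/-- First-order optimality for a (not necessarily convex) quadratic form over a convex set. -/
lemma inner_map_self_le_of_isMinOn (hA : A.IsSymmetric) {S : Set E} (hS : Convex ℝ S)
    {x y : E} (hx : x ∈ S) (hy : y ∈ S) (hmin : IsMinOn (fun z => ⟪z, A z⟫) S x) :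
    ⟪x, A x⟫ ≤ ⟪y, A x⟫ := by
  suffices 0 ≤ ⟪y - x, A x⟫ by rwa [inner_sub_left, sub_nonneg] at this
  refine nonneg_of_forall_mem_Ioc_nonneg_add_mul (b := ⟪y - x, A (y - x)⟫ / 2) fun t ht => ?_
  have hle : ⟪x, A x⟫ ≤ ⟪x + t • (y - x), A (x + t • (y - x))⟫ :=
    hmin (hS.add_smul_sub_mem hx hy (Ioc_subset_Icc_self ht))
  rw [hA.inner_add_smul_map_add_smul] at hle
  nlinarith [ht.1]

lemma inner_add_half_inner_map_self_eq (hA : A.IsSymmetric) {G d₀ : E} (hd₀ : A d₀ = -G)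
    (d : E) :
    ⟪G, d⟫ + ⟪d, A d⟫ / 2 = ⟪G, d₀⟫ / 2 + ⟪d - d₀, A (d - d₀)⟫ / 2 := by
  have h₁ : ⟪d₀, A d⟫ = -⟪G, d⟫ := by rw [← hA, hd₀, inner_neg_left]
  have h₂ : ⟪d, A d₀⟫ = -⟪G, d⟫ := by rw [hd₀, inner_neg_right, real_inner_comm]
  have h₃ : ⟪d₀, A d₀⟫ = -⟪G, d₀⟫ := by rw [hd₀, inner_neg_right, real_inner_comm]
  rw [map_sub, inner_sub_left, inner_sub_right, inner_sub_right, h₁, h₂, h₃]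
  ring

end LinearMap.IsSymmetric

section Simplex

variable {ι E : Type*} [Fintype ι] [NormedAddCommGroup E] [InnerProductSpace ℝ E]

lemma inner_sum_smul_map_le_of_isMinOn_stdSimplex {A : E →ₗ[ℝ] E} (hA : A.IsSymmetric)
    (g : ι → E) {lam : ι → ℝ} (hlam : lam ∈ stdSimplex ℝ ι)
    (hmin : IsMinOn (fun μ => ⟪∑ i, μ i • g i, A (∑ i, μ i • g i)⟫) (stdSimplex ℝ ι) lam)
    (i : ι) :
    ⟪∑ j, lam j • g j, A (∑ j, lam j • g j)⟫ ≤ ⟪g i, A (∑ j, lam j • g j)⟫ := by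
  classical
  set L := Fintype.linearCombination ℝ g
  have hL : ∀ μ, L μ = ∑ j, μ j • g j := Fintype.linearCombination_apply ℝ g
  have hgi : g i ∈ L '' stdSimplex ℝ ι :=
    ⟨Pi.single i 1, single_mem_stdSimplex ℝ i,
    by rw [Fintype.linearCombination_apply_single, one_smul]⟩
  simp only [← hL] at hmin ⊢
  refine hA.inner_map_self_le_of_isMinOn ((convex_stdSimplex ℝ ι).linear_image L)
    (mem_image_of_mem L hlam) hgi ?_
  rintro _ ⟨μ, hμ, rfl⟩
  exact hmin hμ

lemma sum_mul_le_fmax {m : ℕ} [NeZero m] {lam : Fin m → ℝ} (hlam : lam ∈ stdSimplex ℝ (Fin m))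
    (f : Fin m → ℝ) : ∑ i, lam i * f i ≤ fmax f :=
  calc ∑ i, lam i * f i ≤ ∑ i, lam i * fmax f := Finset.sum_le_sum fun i _ =>
        mul_le_mul_of_nonneg_left (Finset.le_sup' f (Finset.mem_univ i)) (hlam.1 i)
    _ = fmax f := by rw [← Finset.sum_mul, hlam.2, one_mul]

end Simplex

theorem stmt3_general {n m : ℕ} [NeZero m]
    (B Binv : EuclideanSpace ℝ (Fin n) →ₗ[ℝ] EuclideanSpace ℝ (Fin n))
    (hsym : ∀ x y : EuclideanSpace ℝ (Fin n), ⟪B x, y⟫ = ⟪x, B y⟫)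
    (hposdef : ∀ x : EuclideanSpace ℝ (Fin n), x ≠ 0 → 0 < ⟪x, B x⟫)
    (hinv1 : ∀ x, B (Binv x) = x)
    (g : Fin m → EuclideanSpace ℝ (Fin n))
    (φ : EuclideanSpace ℝ (Fin n) → ℝ)
    (hφ : ∀ d, φ d = (fmax fun i => ⟪g i, d⟫) + ⟪d, B d⟫ / 2)
    (ψ : (Fin m → ℝ) → ℝ)
    (hψ : ∀ lam, ψ lam = ⟪∑ i, lam i • g i, Binv (∑ i, lam i • g i)⟫ / 2)
    (lamStar : Fin m → ℝ) (hpos : ∀ i, 0 ≤ lamStar i) (hsum : ∑ i, lamStar i = 1)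
    (hlamMin : ∀ lam : Fin m → ℝ, (∀ i, 0 ≤ lam i) → ∑ i, lam i = 1 → ψ lamStar ≤ ψ lam)
    (dStar : EuclideanSpace ℝ (Fin n)) (hd : dStar = -Binv (∑ i, lamStar i • g i)) :
    φ dStar = -ψ lamStar ∧ (∀ d, φ dStar ≤ φ d) ∧
      ∀ d, d ≠ dStar → φ dStar < φ d := by
  set G := ∑ i, lamStar i • g i
  have hB : B.IsSymmetric := hsym
  have hBinv : Binv.IsSymmetric := hB.of_rightInverse hinv1
  have hlam : lamStar ∈ stdSimplex ℝ (Fin m) := ⟨hpos, hsum⟩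
  have hBd : B dStar = -G := by rw [hd, map_neg, hinv1]
  have hinner : ∀ v, ⟪v, dStar⟫ = -⟪v, Binv G⟫ := fun v => by rw [hd, inner_neg_right]
  have hG : ∀ d, ⟪G, d⟫ = ∑ i, lamStar i * ⟪g i, d⟫ := fun d => by
    simp only [G, sum_inner, real_inner_smul_left]
  have hkkt : ∀ i, ⟪g i, dStar⟫ ≤ ⟪G, dStar⟫ := fun i => by
    rw [hinner, hinner, neg_le_neg_iff]
    exact inner_sum_smul_map_le_of_isMinOn_stdSimplex hBinv g hlam
      (fun lam hl => by
        simpa only [mem_ofPred_eq, hψ, div_le_div_iff_of_pos_right (two_pos : (0 : ℝ) < 2)]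
          using hlamMin lam hl.1 hl.2) i
  have hmax : (fmax fun i => ⟪g i, dStar⟫) = ⟪G, dStar⟫ :=
    le_antisymm (Finset.sup'_le _ _ fun i _ => hkkt i) (hG dStar ▸ sum_mul_le_fmax hlam _)
  have hsq := hB.inner_add_half_inner_map_self_eq hBd
  have hφStar : φ dStar = ⟪G, dStar⟫ / 2 := by simp [hφ, hmax, hsq]
  have hlower : ∀ d, φ dStar + ⟪d - dStar, B (d - dStar)⟫ / 2 ≤ φ d := fun d => by
    rw [hφStar, ← hsq, hφ, hG]
    linarith [sum_mul_le_fmax hlam fun i => ⟪g i, d⟫]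
  have hstrict : ∀ d, d ≠ dStar → φ dStar < φ d := fun d hne => by
    linarith [hlower d, hposdef _ (sub_ne_zero.mpr hne)]
  refine ⟨by rw [hφStar, hψ, hinner]; ring, fun d => ?_, hstrict⟩
  rcases eq_or_ne d dStar with rfl | hne
  exacts [le_rfl, (hstrict d hne).le]

/-- Duality for the variable-metric subproblem: for a symmetric positive
definite matrix `B` (with inverse `Binv`), with
`φ d = max_i ⟨g i, d⟩ + ⟨d, B d⟩/2` and `ψ λ = ⟨∑ λ_i g_i, B⁻¹ (∑ λ_i g_i)⟩/2`, for any
minimizer `λ*` of `ψ` over the unit simplex, the vector `d* = −B⁻¹ (∑ λ*_i g_i)` is the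
unique minimizer of `φ` over `ℝ^n` and `min φ = − min ψ` (i.e. `φ d* = −ψ λ*`). -/
theorem stmt3 {n m : ℕ} [NeZero m]
    (B Binv : EuclideanSpace ℝ (Fin n) →ₗ[ℝ] EuclideanSpace ℝ (Fin n))
    (hsym : ∀ x y : EuclideanSpace ℝ (Fin n), ⟪B x, y⟫ = ⟪x, B y⟫)
    (hposdef : ∀ x : EuclideanSpace ℝ (Fin n), x ≠ 0 → 0 < ⟪x, B x⟫)
    (hinv1 : ∀ x, B (Binv x) = x) (hinv2 : ∀ x, Binv (B x) = x)
    (g : Fin m → EuclideanSpace ℝ (Fin n))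
    (φ : EuclideanSpace ℝ (Fin n) → ℝ)
    (hφ : ∀ d, φ d = (fmax fun i => ⟪g i, d⟫) + ⟪d, B d⟫ / 2)
    (ψ : (Fin m → ℝ) → ℝ)
    (hψ : ∀ lam, ψ lam = ⟪∑ i, lam i • g i, Binv (∑ i, lam i • g i)⟫ / 2)
    (lamStar : Fin m → ℝ) (hpos : ∀ i, 0 ≤ lamStar i) (hsum : ∑ i, lamStar i = 1)
    (hlamMin : ∀ lam : Fin m → ℝ, (∀ i, 0 ≤ lam i) → ∑ i, lam i = 1 → ψ lamStar ≤ ψ lam)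
    (dStar : EuclideanSpace ℝ (Fin n)) (hd : dStar = -Binv (∑ i, lamStar i • g i)) :
    φ dStar = -ψ lamStar ∧ (∀ d, φ dStar ≤ φ d) ∧
      ∀ d, d ≠ dStar → φ dStar < φ d :=
  stmt3_general B Binv hsym hposdef hinv1 g φ hφ ψ hψ lamStar hpos hsum hlamMin dStar hd
end

section
/- Let F : ℝ^n → ℝ^m be continuously differentiable, B a symmetric positive definite n×n real matrix, x ∈ ℝ^n, d ∈ ℝ^n with d ≠ 0, and A ⊆ {1,…,m} a nonempty set of indices such that ⟨∇F_i(x), d⟩ = −‖d‖_B² for all i ∈ A. Suppose each F_i with i ∈ A is μ_i-strongly convex relative to ‖·‖_B with μ_i > 0, and let σ ∈ (0,1). If t > 0 satisfies the Armijo condition at x in direction d, then t ≤ 2(1−σ)/max_{i∈A} μ_i. -/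
open scoped RealInnerProductSpace

/-!
Take an active index `i` attaining `max_{i∈A} μ_i` and put `q = ‖d‖_B² > 0`. Strong convexity of
`F_i` at `x` bounds `F_i(x + t d) - F_i(x)` below by `-t q + (μ_i/2) t² q`, the Armijo condition
bounds it above by `-σ t q`; dividing by `t q > 0` leaves `μ_i t ≤ 2(1 - σ)`.
-/

section

variable {E : Type*} [NormedAddCommGroup E] [InnerProductSpace ℝ E]

lemma inner_smul_map_smul (B : E →ₗ[ℝ] E) (t : ℝ) (d : E) :
    ⟪t • d, B (t • d)⟫ = t ^ 2 * ⟪d, B d⟫ := by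
  rw [map_smul, real_inner_smul_left, real_inner_smul_right]
  ring

lemma mul_le_of_armijo_of_quadratic_minorant {f : E → ℝ} {g : E} {B : E →ₗ[ℝ] E} {x d : E}
    {μ σ t : ℝ} (hq : 0 < ⟪d, B d⟫) (ht : 0 < t) (hslope : ⟪g, d⟫ = -⟪d, B d⟫)
    (hminorant : ∀ z, f x + ⟪g, z - x⟫ + μ / 2 * ⟪z - x, B (z - x)⟫ ≤ f z)
    (harmijo : f (x + t • d) - f x ≤ σ * t * ⟪g, d⟫) :
    μ * t ≤ 2 * (1 - σ) := by
  have hlower := hminorant (x + t • d)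
  rw [add_sub_cancel_left, real_inner_smul_right, inner_smul_map_smul, hslope] at hlower
  rw [hslope] at harmijo
  have hprod : t * ⟪d, B d⟫ * (μ * t - 2 * (1 - σ)) ≤ 0 := by nlinarith
  exact sub_nonpos.mp (nonpos_of_mul_nonpos_right hprod (mul_pos ht hq))

end

theorem stmt4_general {n m : ℕ} (F : Fin m → EuclideanSpace ℝ (Fin n) → ℝ)
    (B : EuclideanSpace ℝ (Fin n) →ₗ[ℝ] EuclideanSpace ℝ (Fin n))
    (hposdef : ∀ x : EuclideanSpace ℝ (Fin n), x ≠ 0 → 0 < ⟪x, B x⟫)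
    (x d : EuclideanSpace ℝ (Fin n)) (hd : d ≠ 0)
    (A : Finset (Fin m)) (hA : A.Nonempty)
    (hAd : ∀ i ∈ A, ⟪gradient (F i) x, d⟫ = -⟪d, B d⟫)
    (μ : Fin m → ℝ) (hμ : ∀ i ∈ A, 0 < μ i)
    (hsc : ∀ i ∈ A, ∀ y z : EuclideanSpace ℝ (Fin n),
      F i y + ⟪gradient (F i) y, z - y⟫ + μ i / 2 * ⟪z - y, B (z - y)⟫ ≤ F i z)
    (σ : ℝ) (t : ℝ) (ht : 0 < t)
    (harmijo : ∀ i, F i (x + t • d) - F i x ≤ σ * t * ⟪gradient (F i) x, d⟫) :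
    t ≤ 2 * (1 - σ) / A.sup' hA μ := by
  obtain ⟨i, hiA, hmax⟩ := Finset.exists_mem_eq_sup' hA μ
  rw [hmax, le_div_iff₀ (hμ i hiA), mul_comm]
  exact mul_le_of_armijo_of_quadratic_minorant (hposdef d hd) ht (hAd i hiA)
    (hsc i hiA x) (harmijo i)

/-- Upper bound on Armijo stepsizes.  If `d ≠ 0` satisfies
`⟨∇F_i(x), d⟩ = −‖d‖_B²` for all `i` in a nonempty active set `A`, each `F_i` (`i ∈ A`) is
`μ_i`-strongly convex relative to `‖·‖_B` with `μ_i > 0`, and `t > 0` satisfies the Armijo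
condition at `x` in direction `d`, then `t ≤ 2(1−σ)/max_{i∈A} μ_i`. -/
theorem stmt4 {n m : ℕ} (F : Fin m → EuclideanSpace ℝ (Fin n) → ℝ)
    (hF : ∀ i, ContDiff ℝ 1 (F i))
    (B : EuclideanSpace ℝ (Fin n) →ₗ[ℝ] EuclideanSpace ℝ (Fin n))
    (hsym : ∀ x y : EuclideanSpace ℝ (Fin n), ⟪B x, y⟫ = ⟪x, B y⟫)
    (hposdef : ∀ x : EuclideanSpace ℝ (Fin n), x ≠ 0 → 0 < ⟪x, B x⟫)
    (x d : EuclideanSpace ℝ (Fin n)) (hd : d ≠ 0)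
    (A : Finset (Fin m)) (hA : A.Nonempty)
    (hAd : ∀ i ∈ A, ⟪gradient (F i) x, d⟫ = -⟪d, B d⟫)
    (μ : Fin m → ℝ) (hμ : ∀ i ∈ A, 0 < μ i)
    (hsc : ∀ i ∈ A, ∀ y z : EuclideanSpace ℝ (Fin n),
      F i y + ⟪gradient (F i) y, z - y⟫ + μ i / 2 * ⟪z - y, B (z - y)⟫ ≤ F i z)
    (σ : ℝ) (hσ : σ ∈ Set.Ioo (0 : ℝ) 1) (t : ℝ) (ht : 0 < t)
    (harmijo : ∀ i, F i (x + t • d) - F i x ≤ σ * t * ⟪gradient (F i) x, d⟫) :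
    t ≤ 2 * (1 - σ) / A.sup' hA μ :=
  stmt4_general F B hposdef x d hd A hA hAd μ hμ hsc σ t ht harmijo
end

section
/- Let F : ℝ^n → ℝ^m be differentiable, B a symmetric positive definite n×n real matrix, x ∈ ℝ^n, and d ∈ ℝ^n with d ≠ 0 and ⟨∇F_i(x), d⟩ ≤ −‖d‖_B² for all i ∈ {1,…,m}. Suppose each F_i is L_i-smooth relative to ‖·‖_B with L_i > 0, and let σ, γ ∈ (0,1) and t > 0. If the Armijo condition fails at stepsize t/γ, i.e., F_i(x + (t/γ) d) − F_i(x) > σ (t/γ) ⟨∇F_i(x), d⟩ for some index i, then t ≥ 2γ(1−σ)/max_{i∈{1,…,m}} L_i. -/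
/-! Relative smoothness bounds the increase of `F i` along `d` by
`s ⟪∇F_i x, d⟫ + L_i s² ‖d‖_B² / 2`. If the Armijo test fails at `s = t / γ`, then together
with `⟪∇F_i x, d⟫ ≤ -‖d‖_B²` this gives `(1 - σ) s ‖d‖_B² < L_i s² ‖d‖_B² / 2`, and dividing by
`s ‖d‖_B² > 0` yields `2 (1 - σ) < L_i s ≤ (max L) s`. -/

open scoped RealInnerProductSpace

section RelSmooth

variable {E : Type*} [NormedAddCommGroup E] [InnerProductSpace ℝ E] [CompleteSpace E]

def IsRelSmooth (f : E → ℝ) (B : E →ₗ[ℝ] E) (L : ℝ) : Prop :=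
  ∀ y z : E, f z ≤ f y + ⟪gradient f y, z - y⟫ + L / 2 * ⟪z - y, B (z - y)⟫

variable {f : E → ℝ} {B : E →ₗ[ℝ] E} {L : ℝ}

theorem IsRelSmooth.sub_le_along (h : IsRelSmooth f B L) (x d : E) (s : ℝ) :
    f (x + s • d) - f x ≤ s * ⟪gradient f x, d⟫ + L / 2 * s ^ 2 * ⟪d, B d⟫ := by
  have hstep := h x (x + s • d)
  rw [add_sub_cancel_left, map_smul, real_inner_smul_right, real_inner_smul_left,
    real_inner_smul_right] at hstep
  linarith [show s * (s * ⟪d, B d⟫) = s ^ 2 * ⟪d, B d⟫ by ring]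

theorem IsRelSmooth.lt_mul_of_not_armijo (h : IsRelSmooth f B L) {x d : E} {σ s : ℝ}
    (hdesc : ⟪gradient f x, d⟫ ≤ -⟪d, B d⟫) (hBd : 0 < ⟪d, B d⟫) (hσ : σ < 1) (hs : 0 < s)
    (hfail : σ * s * ⟪gradient f x, d⟫ < f (x + s • d) - f x) :
    2 * (1 - σ) < L * s := by
  have hquad : (1 - σ) * s * ⟪d, B d⟫ < L / 2 * s ^ 2 * ⟪d, B d⟫ := by
    have hincr := h.sub_le_along x d s
    nlinarith [mul_le_mul_of_nonneg_left hdesc (mul_nonneg (sub_nonneg.2 hσ.le) hs.le)]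
  have hsB : 0 < s * ⟪d, B d⟫ := mul_pos hs hBd
  nlinarith

end RelSmooth

theorem stmt5_general {n m : ℕ} [NeZero m] (F : Fin m → EuclideanSpace ℝ (Fin n) → ℝ)
    (B : EuclideanSpace ℝ (Fin n) →ₗ[ℝ] EuclideanSpace ℝ (Fin n))
    (hposdef : ∀ x : EuclideanSpace ℝ (Fin n), x ≠ 0 → 0 < ⟪x, B x⟫)
    (x d : EuclideanSpace ℝ (Fin n)) (hd : d ≠ 0)
    (hdesc : ∀ i, ⟪gradient (F i) x, d⟫ ≤ -⟪d, B d⟫)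
    (L : Fin m → ℝ)
    (hsmooth : ∀ i, ∀ y z : EuclideanSpace ℝ (Fin n),
      F i z ≤ F i y + ⟪gradient (F i) y, z - y⟫ + L i / 2 * ⟪z - y, B (z - y)⟫)
    (σ γ : ℝ) (hσ : σ ∈ Set.Ioo (0 : ℝ) 1) (hγ : γ ∈ Set.Ioo (0 : ℝ) 1)
    (t : ℝ) (ht : 0 < t)
    (hfail : ∃ i, σ * (t / γ) * ⟪gradient (F i) x, d⟫ <
      F i (x + (t / γ) • d) - F i x) :
    2 * γ * (1 - σ) / fmax L ≤ t := by
  obtain ⟨i, hi⟩ := hfail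
  have hs : 0 < t / γ := div_pos ht hγ.1
  have hLi : 2 * (1 - σ) < L i * (t / γ) :=
    IsRelSmooth.lt_mul_of_not_armijo (hsmooth i) (hdesc i) (hposdef d hd) hσ.2 hs hi
  have hmax : L i ≤ fmax L := Finset.le_sup' L (Finset.mem_univ i)
  have hbound : 2 * (1 - σ) < fmax L * (t / γ) :=
    hLi.trans_le (mul_le_mul_of_nonneg_right hmax hs.le)
  have hmax_pos : 0 < fmax L :=
    pos_of_mul_pos_left ((mul_pos two_pos (sub_pos.2 hσ.2)).trans hbound) hs.le
  rw [div_le_iff₀ hmax_pos]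
  rw [mul_div_assoc', lt_div_iff₀ hγ.1] at hbound
  linarith

/-- Lower bound from backtracking.  If `d ≠ 0` satisfies
`⟨∇F_i(x), d⟩ ≤ −‖d‖_B²` for all `i`, each `F_i` is `L_i`-smooth relative to `‖·‖_B` with
`L_i > 0`, and the Armijo condition fails at stepsize `t/γ` for some index `i`, then
`t ≥ 2γ(1−σ)/max_i L_i`. -/
theorem stmt5 {n m : ℕ} [NeZero m] (F : Fin m → EuclideanSpace ℝ (Fin n) → ℝ)
    (hF : ∀ i, Differentiable ℝ (F i))
    (B : EuclideanSpace ℝ (Fin n) →ₗ[ℝ] EuclideanSpace ℝ (Fin n))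
    (hsym : ∀ x y : EuclideanSpace ℝ (Fin n), ⟪B x, y⟫ = ⟪x, B y⟫)
    (hposdef : ∀ x : EuclideanSpace ℝ (Fin n), x ≠ 0 → 0 < ⟪x, B x⟫)
    (x d : EuclideanSpace ℝ (Fin n)) (hd : d ≠ 0)
    (hdesc : ∀ i, ⟪gradient (F i) x, d⟫ ≤ -⟪d, B d⟫)
    (L : Fin m → ℝ) (hL : ∀ i, 0 < L i)
    (hsmooth : ∀ i, ∀ y z : EuclideanSpace ℝ (Fin n),
      F i z ≤ F i y + ⟪gradient (F i) y, z - y⟫ + L i / 2 * ⟪z - y, B (z - y)⟫)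
    (σ γ : ℝ) (hσ : σ ∈ Set.Ioo (0 : ℝ) 1) (hγ : γ ∈ Set.Ioo (0 : ℝ) 1)
    (t : ℝ) (ht : 0 < t)
    (hfail : ∃ i, σ * (t / γ) * ⟪gradient (F i) x, d⟫ <
      F i (x + (t / γ) • d) - F i x) :
    2 * γ * (1 - σ) / fmax L ≤ t :=
  stmt5_general F B hposdef x d hd hdesc L hsmooth σ γ hσ hγ t ht hfail
end

section
/- Let 0 < a ≤ b, let B be a symmetric n×n real matrix with aI ⪯ B ⪯ bI, let g_1,…,g_m ∈ ℝ^n, and let 𝓛 be a nonempty proper subset of {1,…,m}. Let α_min > 0 and δ_i > 0 and α_1,…,α_m satisfy α_i = α_min for i ∈ 𝓛 and α_i ≥ δ_i for i ∉ 𝓛. Suppose λ ∈ Δ_m minimizes over Δ_m the function λ ↦ (1/2)⟨Σ_{i=1}^m λ_i g_i/α_i, B^{-1}(Σ_{i=1}^m λ_i g_i/α_i)⟩, and suppose ε := min_{μ∈Δ_𝓛} ‖Σ_{i∈𝓛} μ_i g_i‖ > 0, where Δ_𝓛 is the set of nonnegative weights on 𝓛 summing to 1. Then Σ_{i∈𝓛}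 λ_i ≤ (α_min/ε)·(1 + b/a)·max_{i∉𝓛} ‖g_i‖/δ_i. -/
/-!
Let `w = ∑ λᵢ gᵢ / αᵢ` and `M = max_{i ∉ 𝓛} ‖gᵢ‖ / δᵢ`. Comparing the optimal `λ` with a vertex
`e_j`, `j ∉ 𝓛`, of the simplex gives `⟪w, B⁻¹ w⟫ ≤ ‖g_j / α_j‖² / a ≤ M² / a`, and `aI ⪯ B ⪯ bI`
turns this into `‖w‖ ≤ (b / a) M`. Now `α_min w = ∑_{i ∈ 𝓛} λᵢ gᵢ + α_min r`, where
`r = ∑_{i ∉ 𝓛} λᵢ gᵢ / αᵢ` has norm at most `M`, while `‖∑_{i ∈ 𝓛} λᵢ gᵢ‖ ≥ ε ∑_{i ∈ 𝓛} λᵢ`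
by homogeneity of the definition of `ε`.
-/

open scoped RealInnerProductSpace

section QuadraticForm

variable {E : Type*} [NormedAddCommGroup E] [InnerProductSpace ℝ E] {B Binv : E →ₗ[ℝ] E} {a b : ℝ}

theorem real_inner_le_norm_sq_div {x y : E} (ha : 0 < a) (h : a * ‖x‖ ^ 2 ≤ ⟪x, y⟫) :
    ⟪x, y⟫ ≤ ‖y‖ ^ 2 / a := by
  have hxy := real_inner_le_norm x y
  rw [le_div_iff₀ ha]
  nlinarith [norm_nonneg x, norm_nonneg y, sq_nonneg (a * ‖x‖ - ‖y‖)]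

theorem LinearMap.IsSymmetric.norm_apply_sq_le (hB : B.IsSymmetric) (hb : 0 < b)
    (hpos : ∀ u, 0 ≤ ⟪u, B u⟫) (hbound : ∀ u, ⟪u, B u⟫ ≤ b * ‖u‖ ^ 2) (x : E) :
    ‖B x‖ ^ 2 ≤ b * ⟪x, B x⟫ := by
  -- `0 ≤ ⟪y, B y⟫` at `y = b • x - B x`, together with `⟪B x, B (B x)⟫ ≤ b ‖B x‖²`
  have h := hpos (b • x - B x)
  have hxy : ⟪x, B (B x)⟫ = ‖B x‖ ^ 2 := by rw [← hB, real_inner_self_eq_norm_sq]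
  simp only [map_sub, map_smul, inner_sub_left, inner_sub_right, real_inner_smul_left,
    real_inner_smul_right, hxy, real_inner_self_eq_norm_sq] at h
  nlinarith [hbound (B x)]

theorem norm_le_div_mul_norm_of_inner_inv_le (hB : B.IsSymmetric) (ha : 0 < a) (hab : a ≤ b)
    (hBa : ∀ u, a * ‖u‖ ^ 2 ≤ ⟪u, B u⟫) (hBb : ∀ u, ⟪u, B u⟫ ≤ b * ‖u‖ ^ 2)
    (hinv : ∀ u, B (Binv u) = u) {w v : E} (h : ⟪w, Binv w⟫ ≤ ⟪v, Binv v⟫) :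
    ‖w‖ ≤ b / a * ‖v‖ := by
  have hpos : ∀ u, 0 ≤ ⟪u, B u⟫ := fun u => (by positivity : 0 ≤ a * ‖u‖ ^ 2).trans (hBa u)
  have hw : ‖w‖ ^ 2 ≤ b * ⟪w, Binv w⟫ := by
    simpa only [hinv, real_inner_comm] using
      hB.norm_apply_sq_le (ha.trans_le hab) hpos hBb (Binv w)
  have hv : ⟪v, Binv v⟫ ≤ ‖v‖ ^ 2 / a := by
    have hv := real_inner_le_norm_sq_div ha (hBa (Binv v))
    rwa [hinv, real_inner_comm] at hv
  have hba : 1 ≤ b / a := (one_le_div ha).2 hab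
  refine (pow_le_pow_iff_left₀ (norm_nonneg w) (by positivity) two_ne_zero).1 ?_
  calc ‖w‖ ^ 2 ≤ b * (‖v‖ ^ 2 / a) :=
        hw.trans (mul_le_mul_of_nonneg_left (h.trans hv) (ha.le.trans hab))
    _ = b / a * ‖v‖ ^ 2 := by ring
    _ ≤ (b / a) ^ 2 * ‖v‖ ^ 2 := by gcongr; nlinarith
    _ = (b / a * ‖v‖) ^ 2 := by ring

end QuadraticForm

section ConvexCombination

variable {ι E : Type*} [SeminormedAddCommGroup E] [NormedSpace ℝ E] {s : Finset ι} {c : ι → ℝ}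

theorem norm_sum_smul_le_sum_mul {v : ι → E} {M : ℝ} (hc : ∀ i ∈ s, 0 ≤ c i)
    (hv : ∀ i ∈ s, ‖v i‖ ≤ M) : ‖∑ i ∈ s, c i • v i‖ ≤ (∑ i ∈ s, c i) * M := by
  rw [Finset.sum_mul]
  refine norm_sum_le_of_le s fun i hi => ?_
  rw [norm_smul, Real.norm_of_nonneg (hc i hi)]
  exact mul_le_mul_of_nonneg_left (hv i hi) (hc i hi)

theorem sum_mul_le_norm_sum_smul {g : ι → E} {ε : ℝ}
    (hε : ∀ μ : ι → ℝ, (∀ i, 0 ≤ μ i) → ∑ i ∈ s, μ i = 1 → ε ≤ ‖∑ i ∈ s, μ i • g i‖)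
    (hc : ∀ i, 0 ≤ c i) : (∑ i ∈ s, c i) * ε ≤ ‖∑ i ∈ s, c i • g i‖ := by
  obtain ht | ht := (Finset.sum_nonneg fun i _ => hc i : 0 ≤ ∑ i ∈ s, c i).eq_or_lt
  · rw [← ht, zero_mul]
    exact norm_nonneg _
  set t := ∑ i ∈ s, c i
  have hnormalized := hε (fun i => t⁻¹ * c i) (fun i => mul_nonneg (inv_nonneg.2 ht.le) (hc i))
    (by rw [← Finset.mul_sum, inv_mul_cancel₀ ht.ne'])
  simp only [← smul_smul, ← Finset.smul_sum, norm_smul, norm_inv, Real.norm_of_nonneg ht.le]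
    at hnormalized
  exact (le_inv_mul_iff₀ ht).1 hnormalized


theorem norm_inv_smul_le_sup' {s : Finset ι} (hs : s.Nonempty) {α δ : ι → ℝ} {g : ι → E} {i : ι}
    (hi : i ∈ s) (hδ : 0 < δ i) (hδα : δ i ≤ α i) :
    ‖(α i)⁻¹ • g i‖ ≤ s.sup' hs (fun i => ‖g i‖ / δ i) := by
  rw [norm_smul, norm_inv, Real.norm_of_nonneg (hδ.trans_le hδα).le, inv_mul_eq_div]
  exact (div_le_div_of_nonneg_left (norm_nonneg _) hδ hδα).trans
    (Finset.le_sup' (fun i => ‖g i‖ / δ i) hi)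

variable [Fintype ι] [DecidableEq ι]

theorem sum_pi_single_div_smul (α : ι → ℝ) (g : ι → E) (j : ι) :
    ∑ i, ((Pi.single j 1 : ι → ℝ) i / α i) • g i = (α j)⁻¹ • g j := by
  simp [Pi.single_apply, ite_div, ite_smul]

theorem smul_sum_div_smul_eq {s : Finset ι} {α : ι → ℝ} {c : ℝ} (hc : c ≠ 0)
    (hα : ∀ i ∈ s, α i = c) (lam : ι → ℝ) (g : ι → E) :
    c • ∑ i, (lam i / α i) • g i =
      ∑ i ∈ s, lam i • g i + c • ∑ i ∈ sᶜ, lam i • (α i)⁻¹ • g i := by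
  rw [← Finset.sum_add_sum_compl s, smul_add]
  simp only [Finset.smul_sum]
  congr 1 <;> refine Finset.sum_congr rfl fun i hi => ?_
  · rw [hα i hi, smul_smul, mul_div_cancel₀ _ hc]
  · simp only [smul_smul, div_eq_mul_inv]

end ConvexCombination

theorem stmt17_general {n m : ℕ} (a b : ℝ) (ha : 0 < a) (hab : a ≤ b)
    (B Binv : EuclideanSpace ℝ (Fin n) →ₗ[ℝ] EuclideanSpace ℝ (Fin n))
    (hsym : ∀ u v : EuclideanSpace ℝ (Fin n), ⟪B u, v⟫ = ⟪u, B v⟫)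
    (hBa : ∀ u : EuclideanSpace ℝ (Fin n), a * ‖u‖ ^ 2 ≤ ⟪u, B u⟫)
    (hBb : ∀ u : EuclideanSpace ℝ (Fin n), ⟪u, B u⟫ ≤ b * ‖u‖ ^ 2)
    (hinv1 : ∀ u, B (Binv u) = u)
    (g : Fin m → EuclideanSpace ℝ (Fin n))
    (ls : Finset (Fin m)) (hlsc : lsᶜ.Nonempty)
    (αmin : ℝ) (hαmin : 0 < αmin) (δ α : Fin m → ℝ)
    (hδ : ∀ i ∉ ls, 0 < δ i)
    (hα1 : ∀ i ∈ ls, α i = αmin) (hα2 : ∀ i ∉ ls, δ i ≤ α i)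
    (lam : Fin m → ℝ) (hlam0 : ∀ i, 0 ≤ lam i) (hlam1 : ∑ i, lam i = 1)
    (hlamMin : ∀ lam' : Fin m → ℝ, (∀ i, 0 ≤ lam' i) → ∑ i, lam' i = 1 →
      ⟪∑ i, (lam i / α i) • g i, Binv (∑ i, (lam i / α i) • g i)⟫ / 2 ≤
        ⟪∑ i, (lam' i / α i) • g i, Binv (∑ i, (lam' i / α i) • g i)⟫ / 2)
    (ε : ℝ) (hε : 0 < ε)
    (hεlb : ∀ μ : Fin m → ℝ, (∀ i, 0 ≤ μ i) → ∑ i ∈ ls, μ i = 1 →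
      ε ≤ ‖∑ i ∈ ls, μ i • g i‖) :
    ∑ i ∈ ls, lam i ≤
      αmin / ε * (1 + b / a) * lsᶜ.sup' hlsc (fun i => ‖g i‖ / δ i) := by
  set M := lsᶜ.sup' hlsc (fun i => ‖g i‖ / δ i)
  have hM : ∀ i ∈ lsᶜ, ‖(α i)⁻¹ • g i‖ ≤ M := fun i hi =>
    norm_inv_smul_le_sup' hlsc hi (hδ i (Finset.mem_compl.1 hi)) (hα2 i (Finset.mem_compl.1 hi))
  obtain ⟨j, hj⟩ := id hlsc
  have hM0 : 0 ≤ M := (norm_nonneg _).trans (hM j hj)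
  set w := ∑ i, (lam i / α i) • g i
  have hw : ‖w‖ ≤ b / a * M := by
    have hvertex := hlamMin (Pi.single j 1)
      (fun i => by by_cases hi : i = j <;> simp [hi]) (by simp)
    rw [sum_pi_single_div_smul] at hvertex
    exact (norm_le_div_mul_norm_of_inner_inv_le hsym ha hab hBa hBb hinv1 (by linarith)).trans
      (mul_le_mul_of_nonneg_left (hM j hj) (div_pos (ha.trans_le hab) ha).le)
  set r := ∑ i ∈ lsᶜ, lam i • (α i)⁻¹ • g i
  have hr : ‖r‖ ≤ M := by
    refine (norm_sum_smul_le_sum_mul (fun i _ => hlam0 i) hM).trans (mul_le_of_le_one_left hM0 ?_)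
    exact hlam1 ▸ Finset.sum_le_sum_of_subset_of_nonneg (Finset.subset_univ _) fun i _ _ => hlam0 i
  have hmass := sum_mul_le_norm_sum_smul hεlb hlam0
  rw [eq_sub_of_add_eq (smul_sum_div_smul_eq hαmin.ne' hα1 lam g).symm] at hmass
  rw [div_mul_eq_mul_div, div_mul_eq_mul_div, le_div_iff₀ hε]
  calc (∑ i ∈ ls, lam i) * ε ≤ ‖αmin • w - αmin • r‖ := hmass
    _ ≤ αmin * ‖w‖ + αmin * ‖r‖ := by
      simpa only [norm_smul, Real.norm_of_nonneg hαmin.le] using norm_sub_le (αmin • w) (αmin • r)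
    _ ≤ αmin * (1 + b / a) * M := by nlinarith

/-- Bound on the sum of the dual variables attached to the "linear"
index set `𝓛`: if `λ` minimizes the dual objective
`λ ↦ ⟨∑ λ_i g_i/α_i, B⁻¹(∑ λ_i g_i/α_i)⟩/2` over the unit simplex and
`ε = min_{μ ∈ Δ_𝓛} ‖∑_{i∈𝓛} μ_i g_i‖ > 0`, then
`∑_{i∈𝓛} λ_i ≤ (α_min/ε)(1 + b/a) max_{i∉𝓛} ‖g_i‖/δ_i`. -/
theorem stmt17 {n m : ℕ} (a b : ℝ) (ha : 0 < a) (hab : a ≤ b)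
    (B Binv : EuclideanSpace ℝ (Fin n) →ₗ[ℝ] EuclideanSpace ℝ (Fin n))
    (hsym : ∀ u v : EuclideanSpace ℝ (Fin n), ⟪B u, v⟫ = ⟪u, B v⟫)
    (hBa : ∀ u : EuclideanSpace ℝ (Fin n), a * ‖u‖ ^ 2 ≤ ⟪u, B u⟫)
    (hBb : ∀ u : EuclideanSpace ℝ (Fin n), ⟪u, B u⟫ ≤ b * ‖u‖ ^ 2)
    (hinv1 : ∀ u, B (Binv u) = u) (hinv2 : ∀ u, Binv (B u) = u)
    (g : Fin m → EuclideanSpace ℝ (Fin n))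
    (ls : Finset (Fin m)) (hls : ls.Nonempty) (hlsc : lsᶜ.Nonempty)
    (αmin : ℝ) (hαmin : 0 < αmin) (δ α : Fin m → ℝ)
    (hδ : ∀ i ∉ ls, 0 < δ i)
    (hα1 : ∀ i ∈ ls, α i = αmin) (hα2 : ∀ i ∉ ls, δ i ≤ α i)
    (lam : Fin m → ℝ) (hlam0 : ∀ i, 0 ≤ lam i) (hlam1 : ∑ i, lam i = 1)
    (hlamMin : ∀ lam' : Fin m → ℝ, (∀ i, 0 ≤ lam' i) → ∑ i, lam' i = 1 →
      ⟪∑ i, (lam i / α i) • g i, Binv (∑ i, (lam i / α i) • g i)⟫ / 2 ≤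
        ⟪∑ i, (lam' i / α i) • g i, Binv (∑ i, (lam' i / α i) • g i)⟫ / 2)
    (ε : ℝ) (hε : 0 < ε)
    (hεlb : ∀ μ : Fin m → ℝ, (∀ i, 0 ≤ μ i) → ∑ i ∈ ls, μ i = 1 →
      ε ≤ ‖∑ i ∈ ls, μ i • g i‖)
    (hεatt : ∃ μ : Fin m → ℝ, (∀ i, 0 ≤ μ i) ∧ ∑ i ∈ ls, μ i = 1 ∧
      ‖∑ i ∈ ls, μ i • g i‖ = ε) :
    ∑ i ∈ ls, lam i ≤
      αmin / ε * (1 + b / a) * lsᶜ.sup' hlsc (fun i => ‖g i‖ / δ i) :=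
  stmt17_general a b ha hab B Binv hsym hBa hBb hinv1 g ls hlsc αmin hαmin δ α hδ hα1 hα2 lam hlam0
    hlam1 hlamMin ε hε hεlb
end
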